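/- Let (X, ρ) be a separable metric space, ν a finite Borel measure on X, and c : X → Y a concept whose boundary set is essentially countable: ∂X = N ∪ Z with N countable and ν(Z) = 0. Then there exists a countable family (U_n)_{n∈ℕ} of subsets of X with ν(X \ ⋃_n U_n) = 0 such that for every sequence (x_s)_{s≥1} in X and every n, there is at most one time t ≥ 2 at which x_t ∈ U_n and the 1-nearest neighbor rule makes a mistake at time t under worst-case tie-breaking. -/

import Mathlib

open scoped ENNReal

/-- The margin of a point `x`: the infimum distance (in `[0,∞]`) to points of a
different class under the concept `c`; `∞` if no such point exists. -/
noncomputable def margin {X Y : Type*} [MetricSpace X] (c : X → Y) (x : X) : ℝ≥0∞ :=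
  ⨅ (x' : X) (_ : c x' ≠ c x), edist x x'

/-- The 1-nearest neighbor rule makes a mistake at time `t ≥ 2` on the sequence
`(x s)_{s ≥ 1}` labeled by `c`, under worst-case tie-breaking, if some nearest
neighbor `x s` (`1 ≤ s < t`) of `x t` has the wrong label. -/
def NNMistake {X Y : Type*} [MetricSpace X] (c : X → Y) (x : ℕ → X) (t : ℕ) : Prop :=
  ∃ s, 1 ≤ s ∧ s < t ∧ (∀ s', 1 ≤ s' → s' < t → edist (x t) (x s) ≤ edist (x t) (x s'))
    ∧ c (x s) ≠ c (x t)

/-!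
Proof idea. Call `U` ball-monochromatic if, for `a, b ∈ U`, every point at least as close
to `a` as `b` carries the label of `a`. If the rule errs at time `t'` on `x t' ∈ U` after an
earlier visit `x t ∈ U`, the wrong nearest neighbour is at least as close to `x t'` as `x t`,
which is impossible; so such a `U` sees at most one mistake. Singletons are ball-monochromatic,
and so are mutually labeling sets, e.g. the points `z` within `r` of a centre `y` whose margin is
at least `2r`. With `y` in a countable dense set and `r = 1/m` these cover every point of
positive margin, and the singletons of `N` cover the rest of `∂X` up to the null set `Z`.
-/

section

variable {X Y : Type*} [MetricSpace X] (c : X → Y)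

def IsBallMonochromatic (U : Set X) : Prop :=
  ∀ a ∈ U, ∀ b ∈ U, ∀ p, edist a p ≤ edist a b → c p = c a

def IsMutuallyLabeling (U : Set X) : Prop :=
  ∀ a ∈ U, ∀ b ∈ U, edist a b < margin c a

def marginBall (y : X) (r : ℝ≥0∞) : Set X :=
  {z | edist z y < r ∧ 2 * r ≤ margin c z}

variable {c}

lemma margin_le_edist {a p : X} (h : c p ≠ c a) : margin c a ≤ edist a p :=
  iInf₂_le p h

lemma eq_of_edist_lt_margin {a p : X} (h : edist a p < margin c a) : c p = c a := by
  by_contra hne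
  exact (margin_le_edist hne).not_gt h

lemma IsMutuallyLabeling.isBallMonochromatic {U : Set X} (hU : IsMutuallyLabeling c U) :
    IsBallMonochromatic c U :=
  fun a ha b hb _ hp => eq_of_edist_lt_margin (hp.trans_lt (hU a ha b hb))

lemma isBallMonochromatic_singleton (z : X) : IsBallMonochromatic c {z} := by
  rintro a rfl b rfl p hp
  rw [edist_self, nonpos_iff_eq_zero, edist_eq_zero] at hp
  rw [hp]

lemma isMutuallyLabeling_marginBall (y : X) (r : ℝ≥0∞) :
    IsMutuallyLabeling c (marginBall c y r) := by
  rintro a ⟨hay, har⟩ b ⟨hby, -⟩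
  calc edist a b ≤ edist a y + edist y b := edist_triangle a y b
    _ < r + r := ENNReal.add_lt_add hay (by rwa [edist_comm])
    _ = 2 * r := (two_mul r).symm
    _ ≤ margin c a := har

lemma exists_mem_marginBall {D : Set X} (hD : Dense D) {z : X} (hz : margin c z ≠ 0) :
    ∃ y ∈ D, ∃ m : ℕ, z ∈ marginBall c y (m : ℝ≥0∞)⁻¹ := by
  obtain ⟨m, hm⟩ :=
    ENNReal.exists_inv_nat_lt (ENNReal.div_pos hz (ENNReal.ofNat_ne_top (n := 2))).ne'
  obtain ⟨y, hyD, hzy⟩ := EMetric.mem_closure_iff.mp (hD z)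
    (m : ℝ≥0∞)⁻¹ (ENNReal.inv_pos.mpr (ENNReal.natCast_ne_top m))
  refine ⟨y, hyD, m, hzy, ?_⟩
  rw [ENNReal.lt_div_iff_mul_lt (by norm_num) (by norm_num), mul_comm] at hm
  exact hm.le

lemma IsBallMonochromatic.subsingleton_nnMistake {U : Set X} (hU : IsBallMonochromatic c U)
    (x : ℕ → X) : {t : ℕ | 2 ≤ t ∧ x t ∈ U ∧ NNMistake c x t}.Subsingleton := by
  have no_later_mistake :
      ∀ t t', 2 ≤ t → x t ∈ U → x t' ∈ U → NNMistake c x t' → ¬ t < t' := by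
    rintro t t' ht htU ht'U ⟨s, -, -, hnearest, hwrong⟩ hlt
    exact hwrong (hU _ ht'U _ htU _ (hnearest t (by omega) hlt))
  rintro t ⟨ht, htU, hmt⟩ t' ⟨ht', ht'U, hmt'⟩
  have := no_later_mistake t t' ht htU ht'U hmt'
  have := no_later_mistake t' t ht' ht'U htU hmt
  omega

lemma exists_countable_isBallMonochromatic_cover [TopologicalSpace.SeparableSpace X]
    {N : Set X} (hN : N.Countable) :
    ∃ 𝒰 : Set (Set X), 𝒰.Countable ∧ 𝒰.Nonempty ∧
      (∀ U ∈ 𝒰, IsBallMonochromatic c U) ∧ {z | margin c z ≠ 0} ∪ N ⊆ ⋃₀ 𝒰 := by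
  obtain ⟨D, hDc, hD⟩ := TopologicalSpace.exists_countable_dense X
  let balls := Set.image2 (fun y (m : ℕ) => marginBall c y (m : ℝ≥0∞)⁻¹) D Set.univ
  refine ⟨insert ∅ (balls ∪ (fun z => {z}) '' N),
    ((hDc.image2 Set.countable_univ _).union (hN.image _)).insert ∅, Set.insert_nonempty _ _,
    ?_, ?_⟩
  · rintro U (rfl | ⟨y, -, m, -, rfl⟩ | ⟨z, -, rfl⟩)
    · simp [IsBallMonochromatic]
    · exact (isMutuallyLabeling_marginBall y _).isBallMonochromatic
    · exact isBallMonochromatic_singleton z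
  · rintro z (hz | hz)
    · obtain ⟨y, hyD, m, hzm⟩ := exists_mem_marginBall hD hz
      exact Set.mem_sUnion.mpr ⟨_, .inr (.inl ⟨y, hyD, m, trivial, rfl⟩), hzm⟩
    · exact Set.mem_sUnion.mpr ⟨{z}, .inr (.inr ⟨z, hz, rfl⟩), rfl⟩

end

theorem nearestNeighbor_OLC_general {X Y : Type*} [MetricSpace X]
    [TopologicalSpace.SeparableSpace X] [MeasurableSpace X]
    (ν : MeasureTheory.Measure X)
    (c : X → Y) (N Z : Set X) (hbd : {x : X | margin c x = 0} = N ∪ Z)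
    (hN : N.Countable) (hZ : ν Z = 0) :
    ∃ U : ℕ → Set X, ν (Set.univ \ ⋃ n, U n) = 0 ∧
      ∀ (x : ℕ → X) (n : ℕ),
        {t : ℕ | 2 ≤ t ∧ x t ∈ U n ∧ NNMistake c x t}.Subsingleton := by
  obtain ⟨𝒰, h𝒰c, h𝒰ne, h𝒰mono, h𝒰cover⟩ :=
    exists_countable_isBallMonochromatic_cover (c := c) hN
  obtain ⟨U, rfl⟩ := h𝒰c.exists_eq_range h𝒰ne
  refine ⟨U, MeasureTheory.measure_mono_null ?_ hZ, fun x n =>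
    (h𝒰mono _ (Set.mem_range_self n)).subsingleton_nnMistake x⟩
  rintro z ⟨-, hzU⟩
  rw [← Set.sUnion_range] at hzU
  by_cases hz : margin c z = 0
  · have hzNZ : z ∈ N ∪ Z := hbd ▸ hz
    exact hzNZ.resolve_left fun hzN => hzU (h𝒰cover (.inr hzN))
  · exact absurd (h𝒰cover (.inl hz)) hzU

/-- If `X` is a separable metric space with a finite Borel measure `ν` and the boundary
set of the concept `c` is essentially countable, then there is a countable family
`(U n)` of subsets covering `ν`-almost all of `X` such that, on any sequence, each `U n`
witnesses at most one nearest-neighbor mistake (under worst-case tie-breaking). -/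
theorem nearestNeighbor_OLC {X Y : Type*} [MetricSpace X]
    [TopologicalSpace.SeparableSpace X] [MeasurableSpace X] [BorelSpace X]
    (ν : MeasureTheory.Measure X) [MeasureTheory.IsFiniteMeasure ν]
    (c : X → Y) (N Z : Set X) (hbd : {x : X | margin c x = 0} = N ∪ Z)
    (hN : N.Countable) (hZ : ν Z = 0) :
    ∃ U : ℕ → Set X, ν (Set.univ \ ⋃ n, U n) = 0 ∧
      ∀ (x : ℕ → X) (n : ℕ),
        {t : ℕ | 2 ≤ t ∧ x t ∈ U n ∧ NNMistake c x t}.Subsingleton :=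
  nearestNeighbor_OLC_general ν c N Z hbd hN hZ
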